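/- Let (E,J,R) be a dH triple whose pencil λE − (J−R) is regular. If E is Hermitian positive definite, then there is no pair (ΔJ,ΔR) ∈ S_d(J,R) for which the pencil λE − (J+ΔJ) + (R+ΔR) is singular (so d_sing^{S_d}(J,R) = ∞). If E is singular, let r := dim ker E ≥ 1 and let N ∈ ℂ^{n×r} be a matrix whose columns form an orthonormal basis of ker E; then (d_sing^{S_d}(J,R))² = inf_{x ∈ ℂʳ\{0}} { (x*N*R²Nx/(x*N*RNx))² + x*N*J*JNx/(x*x) }, where a quotient with numerator and denominator both zero is interpreted as 0. -/

import Mathlib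

open Matrix
open scoped ComplexOrder ENNReal

noncomputable section

/-- Euclidean norm of a complex vector. -/
def vecNorm {ι : Type*} [Fintype ι] (x : ι → ℂ) : ℝ :=
  Real.sqrt (∑ i, Complex.normSq (x i))

/-- Spectral norm (largest singular value; the ℓ²→ℓ² operator norm). -/
def specNorm {ι κ : Type*} [Fintype ι] [Fintype κ] [DecidableEq κ] (A : Matrix ι κ ℂ) : ℝ :=
  ‖(Matrix.toEuclideanLin A).toContinuousLinearMap‖

/-- Size of a perturbation pair: `sqrt(‖ΔJ‖² + ‖ΔR‖²)` (spectral norms). -/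
def pairNorm {n : ℕ} (dJ dR : Matrix (Fin n) (Fin n) ℂ) : ℝ :=
  Real.sqrt (specNorm dJ ^ 2 + specNorm dR ^ 2)

/-- Membership in the structured perturbation set `S_d(J,R)` (with `E` fixed). -/
def SdJR {n : ℕ} (R dJ dR : Matrix (Fin n) (Fin n) ℂ) : Prop :=
  dJᴴ = -dJ ∧ (-dR).PosSemidef ∧ (R + dR).PosSemidef

/-- Membership in the structured perturbation set `S_i(J,R)` (with `E` fixed). -/
def SiJR {n : ℕ} (R dJ dR : Matrix (Fin n) (Fin n) ℂ) : Prop :=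
  dJᴴ = -dJ ∧ dR.IsHermitian ∧ (R + dR).PosSemidef

/-- The pencil `λE − A` is singular: `det(λE − A) = 0` for all `λ`. -/
def pencilSingular {n : ℕ} (E' A : Matrix (Fin n) (Fin n) ℂ) : Prop :=
  ∀ lam : ℂ, Matrix.det (lam • E' - A) = 0

/-- Structured distance to singularity with respect to `S_d(J,R)` (perturbing only `J` and
`R`), in `[0,∞]`. -/
def dSingSdJR {n : ℕ} (E J R : Matrix (Fin n) (Fin n) ℂ) : ℝ≥0∞ :=
  sInf {c : ℝ≥0∞ | ∃ dJ dR : Matrix (Fin n) (Fin n) ℂ, SdJR R dJ dR ∧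
    pencilSingular E (J + dJ - (R + dR)) ∧ c = ENNReal.ofReal (pairNorm dJ dR)}

/-!
If a perturbation in `S_d(J,R)` makes the pencil singular, then at `λ = 1` there is `v ≠ 0`
with `(E - (J + ΔJ) + (R + ΔR)) v = 0`. As `J + ΔJ` is skew-Hermitian, the real part of
`v*(…)v` is `v*Ev + v*(R + ΔR)v`, a sum of nonnegative terms, so `v` is a common null vector of `E`,
`J + ΔJ` and `R + ΔR`. Hence `E > 0` admits no such perturbation, and otherwise `v ∈ ker E`,
`‖ΔJ‖ ≥ ‖Jv‖/‖v‖`, and `S = -ΔR ≥ 0` with `Sv = Rv` gives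
`‖Rv‖² = v*S²v ≤ ‖S‖ v*Sv = ‖ΔR‖ v*Rv`. Both bounds are attained for every `v ∈ ker E`:
by `ΔR = -(Rv)(Rv)*/(v*Rv)`, and by `ΔJ` a multiple of `i` times a Householder reflection.
-/

open scoped Matrix.Norms.L2Operator

lemma vecMulVec_star_mulVec {ι κ : Type*} [Fintype κ] (a : ι → ℂ) (b z : κ → ℂ) :
    vecMulVec a (star b) *ᵥ z = (star b ⬝ᵥ z) • a := by
  ext i
  simp [vecMulVec_mulVec, mul_comm]

section Norms

variable {ι κ : Type*} [Fintype ι] [Fintype κ]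

lemma vecNorm_eq_norm (x : ι → ℂ) : vecNorm x = ‖WithLp.toLp 2 x‖ := by
  simp [vecNorm, EuclideanSpace.norm_eq, Complex.normSq_eq_norm_sq]

lemma star_dotProduct_eq_inner (x y : ι → ℂ) :
    star x ⬝ᵥ y = inner ℂ (WithLp.toLp 2 x) (WithLp.toLp 2 y) := by
  simp [PiLp.inner_apply, dotProduct, mul_comm]

lemma star_dotProduct_self (x : ι → ℂ) : star x ⬝ᵥ x = ((vecNorm x ^ 2 : ℝ) : ℂ) := by
  rw [star_dotProduct_eq_inner, vecNorm_eq_norm, inner_self_eq_norm_sq_to_K]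
  norm_cast

lemma re_star_dotProduct_self (x : ι → ℂ) : (star x ⬝ᵥ x).re = vecNorm x ^ 2 := by
  rw [star_dotProduct_self, Complex.ofReal_re]

lemma norm_star_dotProduct_le (x y : ι → ℂ) : ‖star x ⬝ᵥ y‖ ≤ vecNorm x * vecNorm y := by
  rw [star_dotProduct_eq_inner, vecNorm_eq_norm, vecNorm_eq_norm]
  exact norm_inner_le_norm _ _

lemma vecNorm_nonneg (x : ι → ℂ) : 0 ≤ vecNorm x := Real.sqrt_nonneg _

lemma vecNorm_smul (c : ℂ) (x : ι → ℂ) : vecNorm (c • x) = ‖c‖ * vecNorm x := by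
  rw [vecNorm_eq_norm, vecNorm_eq_norm, WithLp.toLp_smul, norm_smul]

lemma vecNorm_neg (x : ι → ℂ) : vecNorm (-x) = vecNorm x := by
  rw [vecNorm_eq_norm, vecNorm_eq_norm, WithLp.toLp_neg, norm_neg]

lemma vecNorm_pos {x : ι → ℂ} (hx : x ≠ 0) : 0 < vecNorm x := by
  rw [vecNorm_eq_norm, norm_pos_iff]
  exact fun h => hx (by simpa using congrArg WithLp.ofLp h)

variable [DecidableEq κ]

lemma specNorm_eq_norm (A : Matrix ι κ ℂ) : specNorm A = ‖A‖ := rfl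

lemma specNorm_nonneg (A : Matrix ι κ ℂ) : 0 ≤ specNorm A := norm_nonneg _

lemma specNorm_neg (A : Matrix ι κ ℂ) : specNorm (-A) = specNorm A := norm_neg A

lemma specNorm_smul (c : ℂ) (A : Matrix ι κ ℂ) : specNorm (c • A) = ‖c‖ * specNorm A :=
  norm_smul c A

lemma vecNorm_mulVec_le (A : Matrix ι κ ℂ) (x : κ → ℂ) :
    vecNorm (A *ᵥ x) ≤ specNorm A * vecNorm x := by
  rw [specNorm_eq_norm]
  simpa [vecNorm_eq_norm] using A.l2_opNorm_mulVec (WithLp.toLp 2 x)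

lemma specNorm_le_of_forall_vecNorm_mulVec_le {A : Matrix ι κ ℂ} {c : ℝ} (hc : 0 ≤ c)
    (h : ∀ x, vecNorm (A *ᵥ x) ≤ c * vecNorm x) : specNorm A ≤ c :=
  ContinuousLinearMap.opNorm_le_bound _ hc fun x => by
    simpa [vecNorm_eq_norm, Matrix.toLpLin_apply] using h x.ofLp

lemma specNorm_vecMulVec_star_le (a : ι → ℂ) (b : κ → ℂ) :
    specNorm (vecMulVec a (star b)) ≤ vecNorm a * vecNorm b := by
  refine specNorm_le_of_forall_vecNorm_mulVec_le
    (mul_nonneg (vecNorm_nonneg a) (vecNorm_nonneg b)) fun z => ?_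
  rw [vecMulVec_star_mulVec, vecNorm_smul, mul_comm, mul_assoc]
  exact mul_le_mul_of_nonneg_left (norm_star_dotProduct_le b z) (vecNorm_nonneg a)

lemma specNorm_conjTranspose [DecidableEq ι] (A : Matrix ι κ ℂ) : specNorm Aᴴ = specNorm A :=
  Matrix.l2_opNorm_conjTranspose A

lemma specNorm_conjTranspose_mul_self (A : Matrix ι κ ℂ) :
    specNorm (Aᴴ * A) = specNorm A ^ 2 := by
  rw [specNorm_eq_norm, specNorm_eq_norm, Matrix.l2_opNorm_conjTranspose_mul_self, sq]

end Norms

section QuadraticForms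

variable {ι κ : Type*} [Fintype ι] [Fintype κ]

lemma star_dotProduct_conjTranspose_mul_mul_mulVec (B : Matrix κ ι ℂ) (M : Matrix κ κ ℂ)
    (x y : ι → ℂ) : star x ⬝ᵥ (Bᴴ * M * B) *ᵥ y = star (B *ᵥ x) ⬝ᵥ M *ᵥ (B *ᵥ y) := by
  rw [← mulVec_mulVec, ← mulVec_mulVec, dotProduct_mulVec, ← star_mulVec]

lemma star_dotProduct_conjTranspose_mul_self_mulVec (B : Matrix κ ι ℂ) (x y : ι → ℂ) :
    star x ⬝ᵥ (Bᴴ * B) *ᵥ y = star (B *ᵥ x) ⬝ᵥ B *ᵥ y := by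
  rw [← mulVec_mulVec, dotProduct_mulVec, ← star_mulVec]

lemma re_star_dotProduct_conjTranspose_mul_self_mulVec (B : Matrix κ ι ℂ) (x : ι → ℂ) :
    (star x ⬝ᵥ (Bᴴ * B) *ᵥ x).re = vecNorm (B *ᵥ x) ^ 2 := by
  rw [star_dotProduct_conjTranspose_mul_self_mulVec, re_star_dotProduct_self]

lemma re_star_dotProduct_mulVec_of_skewHermitian {J : Matrix ι ι ℂ} (hJ : Jᴴ = -J)
    (x : ι → ℂ) : (star x ⬝ᵥ J *ᵥ x).re = 0 := by
  have h : star (star x ⬝ᵥ J *ᵥ x) = star x ⬝ᵥ Jᴴ *ᵥ x := by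
    rw [star_dotProduct x (J *ᵥ x), star_star, star_mulVec, ← dotProduct_mulVec]
  rw [hJ, neg_mulVec, dotProduct_neg] at h
  have := congrArg Complex.re h
  simp only [Complex.star_def, Complex.conj_re, Complex.neg_re] at this
  linarith

lemma star_dotProduct_vecMulVec_star_mulVec (a z : ι → ℂ) :
    star z ⬝ᵥ vecMulVec a (star a) *ᵥ z = ((‖star a ⬝ᵥ z‖ ^ 2 : ℝ) : ℂ) := by
  rw [vecMulVec_star_mulVec, dotProduct_smul, smul_eq_mul, star_dotProduct z a,
    Complex.star_def, Complex.mul_conj']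
  push_cast
  ring

variable {S : Matrix ι ι ℂ}

lemma Matrix.PosSemidef.re_star_dotProduct_mulVec_nonneg (hS : S.PosSemidef) (x : ι → ℂ) :
    0 ≤ (star x ⬝ᵥ S *ᵥ x).re :=
  hS.re_dotProduct_nonneg x

variable [DecidableEq ι]

open scoped MatrixOrder in
lemma Matrix.PosSemidef.exists_eq_conjTranspose_mul_self (hS : S.PosSemidef) :
    ∃ B : Matrix ι ι ℂ, S = Bᴴ * B :=
  CStarAlgebra.nonneg_iff_eq_star_mul_self.mp hS.nonneg

lemma Matrix.PosSemidef.star_dotProduct_mulVec_self (hS : S.PosSemidef) (x : ι → ℂ) :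
    star x ⬝ᵥ S *ᵥ x = ((star x ⬝ᵥ S *ᵥ x).re : ℂ) := by
  obtain ⟨B, rfl⟩ := hS.exists_eq_conjTranspose_mul_self
  rw [star_dotProduct_conjTranspose_mul_self_mulVec, star_dotProduct_self, Complex.ofReal_re]

lemma Matrix.PosSemidef.mulVec_eq_zero_of_re_eq_zero (hS : S.PosSemidef) {x : ι → ℂ}
    (hx : (star x ⬝ᵥ S *ᵥ x).re = 0) : S *ᵥ x = 0 := by
  rw [← hS.dotProduct_mulVec_zero_iff, hS.star_dotProduct_mulVec_self, hx, Complex.ofReal_zero]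

lemma Matrix.PosSemidef.norm_star_dotProduct_mulVec_sq_le (hS : S.PosSemidef) (x y : ι → ℂ) :
    ‖star x ⬝ᵥ S *ᵥ y‖ ^ 2 ≤ (star x ⬝ᵥ S *ᵥ x).re * (star y ⬝ᵥ S *ᵥ y).re := by
  obtain ⟨B, rfl⟩ := hS.exists_eq_conjTranspose_mul_self
  rw [star_dotProduct_conjTranspose_mul_self_mulVec,
    re_star_dotProduct_conjTranspose_mul_self_mulVec,
    re_star_dotProduct_conjTranspose_mul_self_mulVec, ← mul_pow]
  gcongr
  exact norm_star_dotProduct_le _ _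

lemma Matrix.PosSemidef.vecNorm_mulVec_sq_le (hS : S.PosSemidef) (x : ι → ℂ) :
    vecNorm (S *ᵥ x) ^ 2 ≤ specNorm S * (star x ⬝ᵥ S *ᵥ x).re := by
  obtain ⟨B, rfl⟩ := hS.exists_eq_conjTranspose_mul_self
  rw [re_star_dotProduct_conjTranspose_mul_self_mulVec, specNorm_conjTranspose_mul_self,
    ← mulVec_mulVec, ← mul_pow, ← specNorm_conjTranspose]
  exact pow_le_pow_left₀ (vecNorm_nonneg _) (vecNorm_mulVec_le _ _) 2

end QuadraticForms

section Perturbations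

variable {ι : Type*} [Fintype ι] [DecidableEq ι]

lemma exists_common_null_vector {E J R : Matrix ι ι ℂ} (hE : E.PosSemidef) (hJ : Jᴴ = -J)
    (hR : R.PosSemidef) (hdet : (E - (J - R)).det = 0) :
    ∃ v ≠ 0, E *ᵥ v = 0 ∧ J *ᵥ v = 0 ∧ R *ᵥ v = 0 := by
  obtain ⟨v, hv0, hv⟩ := exists_mulVec_eq_zero_iff.mpr hdet
  rw [sub_mulVec, sub_mulVec] at hv
  have hform : (star v ⬝ᵥ E *ᵥ v).re + (star v ⬝ᵥ R *ᵥ v).re = 0 := by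
    have := congrArg (fun y => (star v ⬝ᵥ y).re) hv
    simp only [dotProduct_sub, Complex.sub_re, re_star_dotProduct_mulVec_of_skewHermitian hJ,
      dotProduct_zero, Complex.zero_re] at this
    linarith
  have hE0 : (star v ⬝ᵥ E *ᵥ v).re = 0 := by
    linarith [hE.re_star_dotProduct_mulVec_nonneg v, hR.re_star_dotProduct_mulVec_nonneg v]
  have hR0 : (star v ⬝ᵥ R *ᵥ v).re = 0 := by linarith
  have hEv := hE.mulVec_eq_zero_of_re_eq_zero hE0
  have hRv := hR.mulVec_eq_zero_of_re_eq_zero hR0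
  rw [hEv, hRv, sub_zero, zero_sub, neg_eq_zero] at hv
  exact ⟨v, hv0, hEv, hv, hRv⟩

lemma Matrix.PosSemidef.vecNorm_mulVec_sq_div_le {S : Matrix ι ι ℂ} (hS : S.PosSemidef)
    (x : ι → ℂ) : vecNorm (S *ᵥ x) ^ 2 / (star x ⬝ᵥ S *ᵥ x).re ≤ specNorm S :=
  div_le_of_le_mul₀ (hS.re_star_dotProduct_mulVec_nonneg x) (specNorm_nonneg S)
    (hS.vecNorm_mulVec_sq_le x)

/-- The paper's quotient `(x*N*R²Nx / x*N*RNx)² + x*N*J*JNx / x*x` at `v = Nx`. -/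
def nullVectorCost (J R : Matrix ι ι ℂ) (v : ι → ℂ) : ℝ :=
  (vecNorm (R *ᵥ v) ^ 2 / (star v ⬝ᵥ R *ᵥ v).re) ^ 2 + vecNorm (J *ᵥ v) ^ 2 / vecNorm v ^ 2

lemma nullVectorCost_le {J R dJ dR : Matrix ι ι ℂ} {v : ι → ℂ} (hdR : (-dR).PosSemidef)
    (hJv : (J + dJ) *ᵥ v = 0) (hRv : (R + dR) *ᵥ v = 0) :
    nullVectorCost J R v ≤ specNorm dJ ^ 2 + specNorm dR ^ 2 := by
  rw [add_mulVec, add_eq_zero_iff_eq_neg, ← neg_mulVec] at hJv hRv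
  have hR : vecNorm (R *ᵥ v) ^ 2 / (star v ⬝ᵥ R *ᵥ v).re ≤ specNorm dR := by
    rw [hRv, ← specNorm_neg]
    exact hdR.vecNorm_mulVec_sq_div_le v
  have hJ : vecNorm (J *ᵥ v) ^ 2 / vecNorm v ^ 2 ≤ specNorm dJ ^ 2 := by
    refine div_le_of_le_mul₀ (sq_nonneg _) (sq_nonneg _) ?_
    rw [hJv, ← specNorm_neg, ← mul_pow]
    exact pow_le_pow_left₀ (vecNorm_nonneg _) (vecNorm_mulVec_le _ _) 2
  have hR0 : 0 ≤ vecNorm (R *ᵥ v) ^ 2 / (star v ⬝ᵥ R *ᵥ v).re := by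
    rw [hRv]
    exact div_nonneg (sq_nonneg _) (hdR.re_star_dotProduct_mulVec_nonneg v)
  have hR2 := pow_le_pow_left₀ hR0 hR 2
  unfold nullVectorCost
  linarith

/-- The rank-one correction `-(Rv)(Rv)*/(v*Rv)`; Cauchy–Schwarz for the form of `R` keeps
`R + ΔR` positive semidefinite. -/
lemma Matrix.PosSemidef.exists_perturbation_mulVec_eq_zero {R : Matrix ι ι ℂ}
    (hR : R.PosSemidef) (v : ι → ℂ) :
    ∃ dR : Matrix ι ι ℂ, (-dR).PosSemidef ∧ (R + dR).PosSemidef ∧ (R + dR) *ᵥ v = 0 ∧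
      specNorm dR ≤ vecNorm (R *ᵥ v) ^ 2 / (star v ⬝ᵥ R *ᵥ v).re := by
  set a := R *ᵥ v
  set t := (star v ⬝ᵥ R *ᵥ v).re
  have ht : 0 ≤ t := hR.re_star_dotProduct_mulVec_nonneg v
  have ha : ∀ z, star a ⬝ᵥ z = star v ⬝ᵥ R *ᵥ z := fun z => by
    rw [star_mulVec, ← dotProduct_mulVec, hR.1.eq]
  have hP : (t⁻¹ • vecMulVec a (star a)).PosSemidef :=
    (posSemidef_vecMulVec_self_star a).smul (inv_nonneg.mpr ht)
  refine ⟨-(t⁻¹ • vecMulVec a (star a)), by rwa [neg_neg], ?_, ?_, ?_⟩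
  · rw [← sub_eq_add_neg]
    refine PosSemidef.of_dotProduct_mulVec_nonneg (hR.1.sub hP.1) fun z => ?_
    have hCS : ‖star a ⬝ᵥ z‖ ^ 2 ≤ t * (star z ⬝ᵥ R *ᵥ z).re := by
      rw [ha]
      exact hR.norm_star_dotProduct_mulVec_sq_le v z
    rw [sub_mulVec, dotProduct_sub, smul_mulVec, dotProduct_smul,
      star_dotProduct_vecMulVec_star_mulVec, hR.star_dotProduct_mulVec_self, ← Complex.coe_smul,
      smul_eq_mul, ← Complex.ofReal_mul, ← Complex.ofReal_sub, Complex.zero_le_real, sub_nonneg]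
    exact inv_mul_le_of_le_mul₀ ht (hR.re_star_dotProduct_mulVec_nonneg z) hCS
  · have hav : star a ⬝ᵥ v = t := by rw [ha, ← hR.star_dotProduct_mulVec_self]
    rw [add_mulVec, neg_mulVec, smul_mulVec, vecMulVec_star_mulVec, hav, Complex.coe_smul,
      smul_smul, add_neg_eq_zero]
    rcases ht.eq_or_lt with ht0 | htpos
    · rw [← ht0]
      simpa using hR.mulVec_eq_zero_of_re_eq_zero ht0.symm
    · rw [inv_mul_cancel₀ htpos.ne', one_smul]
  · rw [specNorm_neg, ← Complex.coe_smul, specNorm_smul, Complex.norm_real, Real.norm_eq_abs,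
      abs_of_nonneg (inv_nonneg.mpr ht), inv_mul_eq_div, sq]
    exact div_le_div_of_nonneg_right (specNorm_vecMulVec_star_le a a) ht

lemma specNorm_le_one_of_conjTranspose_mul_self_eq_one {U : Matrix ι ι ℂ} (hU : Uᴴ * U = 1) :
    specNorm U ≤ 1 := by
  refine specNorm_le_of_forall_vecNorm_mulVec_le zero_le_one fun z => ?_
  have h := re_star_dotProduct_conjTranspose_mul_self_mulVec U z
  rw [hU, one_mulVec, re_star_dotProduct_self] at h
  rw [one_mul]
  exact (pow_le_pow_iff_left₀ (vecNorm_nonneg _) (vecNorm_nonneg _) two_ne_zero).mp h.ge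

/-- A Householder reflection `I - 2ww*/(w*w)`, `w = v - g`, maps `v` to `g`. -/
lemma exists_isHermitian_unitary_mulVec_eq {v g : ι → ℂ} (hnorm : star g ⬝ᵥ g = star v ⬝ᵥ v)
    (hreal : (star v ⬝ᵥ g).im = 0) :
    ∃ U : Matrix ι ι ℂ, Uᴴ = U ∧ Uᴴ * U = 1 ∧ U *ᵥ v = g := by
  by_cases hvg : v = g
  · exact ⟨1, conjTranspose_one, by rw [conjTranspose_one, one_mul], by rw [one_mulVec, hvg]⟩
  set w := v - g
  set d : ℝ := vecNorm w ^ 2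
  have hd : (d : ℂ) ≠ 0 := by
    exact_mod_cast pow_ne_zero 2 (vecNorm_pos (sub_ne_zero.mpr hvg)).ne'
  have hww : star w ⬝ᵥ w = d := star_dotProduct_self w
  have hgv : star g ⬝ᵥ v = star v ⬝ᵥ g := by
    rw [← star_star (star v ⬝ᵥ g), star_dotProduct g, star_star, Complex.star_def,
      Complex.conj_eq_iff_im.mpr hreal]
  have hwv : star w ⬝ᵥ v = d / 2 := by
    rw [← hww]
    simp only [w, star_sub, sub_dotProduct, dotProduct_sub, hnorm, hgv]
    ring
  set P := vecMulVec w (star w)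
  set c : ℂ := 2 / d
  have hcd : c * d = 2 := div_mul_cancel₀ 2 hd
  have hPP : P * P = (d : ℂ) • P := by
    rw [vecMulVec_mul_vecMulVec, hww, vecMulVec_smul]
  have hUH : (1 - c • P)ᴴ = 1 - c • P := by
    simp [P, c, conjTranspose_vecMulVec, Complex.conj_ofReal]
  refine ⟨1 - c • P, hUH, ?_, ?_⟩
  · rw [hUH, sub_mul, mul_sub, mul_sub, one_mul, mul_one, one_mul, smul_mul_smul_comm, hPP,
      smul_smul]
    have hc : c * c * d = 2 * c := by linear_combination c * hcd
    rw [hc]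
    module
  · rw [sub_mulVec, one_mulVec, smul_mulVec, vecMulVec_star_mulVec, hwv, smul_smul]
    have hc : c * (d / 2) = 1 := by linear_combination hcd / 2
    rw [hc, one_smul, sub_sub_cancel]

/-- `K = (iβ/ν) U` for a Householder reflection `U` taking `v` to `g = (-iν/β) y`, which has
the length of `v` and `v*g` real. -/
lemma exists_skewHermitian_mulVec_eq {v y : ι → ℂ} (hv : v ≠ 0) (hy : (star v ⬝ᵥ y).re = 0) :
    ∃ K : Matrix ι ι ℂ, Kᴴ = -K ∧ K *ᵥ v = y ∧ specNorm K ≤ vecNorm y / vecNorm v := by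
  by_cases hy0 : y = 0
  · refine ⟨0, by rw [conjTranspose_zero, neg_zero], by rw [zero_mulVec, hy0], ?_⟩
    rw [hy0, specNorm_eq_norm, norm_zero]
    exact div_nonneg (vecNorm_nonneg _) (vecNorm_nonneg _)
  set β := vecNorm y
  set ν := vecNorm v
  have hβ : 0 < β := vecNorm_pos hy0
  have hν : 0 < ν := vecNorm_pos hv
  have hβ' : (β : ℂ) ≠ 0 := by exact_mod_cast hβ.ne'
  have hν' : (ν : ℂ) ≠ 0 := by exact_mod_cast hν.ne'
  set g := (-Complex.I * ν / β) • y
  have hg : star g ⬝ᵥ g = star v ⬝ᵥ v := by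
    have : vecNorm g = ν := by
      rw [vecNorm_smul, norm_div, norm_mul, norm_neg, Complex.norm_I, Complex.norm_real,
        Complex.norm_real, Real.norm_of_nonneg hν.le, Real.norm_of_nonneg hβ.le, one_mul,
        div_mul_cancel₀ _ hβ.ne']
    rw [star_dotProduct_self, star_dotProduct_self, this]
  have hreal : (star v ⬝ᵥ g).im = 0 := by
    rw [dotProduct_smul, smul_eq_mul]
    simp [Complex.mul_im, Complex.div_re, Complex.div_im, hy]
  obtain ⟨U, hUH, hUU, hUv⟩ := exists_isHermitian_unitary_mulVec_eq hg hreal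
  refine ⟨(Complex.I * β / ν) • U, ?_, ?_, ?_⟩
  · rw [conjTranspose_smul, hUH, ← neg_smul]
    congr 1
    simp [Complex.conj_ofReal]
    ring
  · rw [smul_mulVec, hUv, smul_smul]
    convert one_smul ℂ y
    field_simp
    rw [Complex.I_sq]
    ring
  · rw [specNorm_smul, norm_div, norm_mul, Complex.norm_I, Complex.norm_real, Complex.norm_real,
      Real.norm_of_nonneg hν.le, Real.norm_of_nonneg hβ.le, one_mul]
    exact mul_le_of_le_one_right (div_nonneg hβ.le hν.le)
      (specNorm_le_one_of_conjTranspose_mul_self_eq_one hUU)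

end Perturbations

section Distance

variable {n : ℕ}

lemma pencilSingular_of_mulVec_eq_zero {E A : Matrix (Fin n) (Fin n) ℂ} {v : Fin n → ℂ}
    (hv : v ≠ 0) (hE : E *ᵥ v = 0) (hA : A *ᵥ v = 0) : pencilSingular E A := fun lam =>
  exists_mulVec_eq_zero_iff.mp ⟨v, hv, by rw [sub_mulVec, smul_mulVec, hE, hA, smul_zero, sub_zero]⟩

lemma exists_null_vector_of_pencilSingular {E J R dJ dR : Matrix (Fin n) (Fin n) ℂ}
    (hE : E.PosSemidef) (hJ : Jᴴ = -J) (hS : SdJR R dJ dR)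
    (hsing : pencilSingular E (J + dJ - (R + dR))) :
    ∃ v ≠ 0, E *ᵥ v = 0 ∧ (J + dJ) *ᵥ v = 0 ∧ (R + dR) *ᵥ v = 0 :=
  exists_common_null_vector hE (by rw [conjTranspose_add, hJ, hS.1, neg_add]) hS.2.2
    (by simpa using hsing 1)

lemma exists_perturbation_le_nullVectorCost {J R : Matrix (Fin n) (Fin n) ℂ} (hJ : Jᴴ = -J)
    (hR : R.PosSemidef) {v : Fin n → ℂ} (hv : v ≠ 0) :
    ∃ dJ dR, SdJR R dJ dR ∧ (J + dJ) *ᵥ v = 0 ∧ (R + dR) *ᵥ v = 0 ∧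
      specNorm dJ ^ 2 + specNorm dR ^ 2 ≤ nullVectorCost J R v := by
  obtain ⟨dJ, hdJ, hJv, hdJn⟩ := exists_skewHermitian_mulVec_eq hv (y := -(J *ᵥ v)) (by
    rw [dotProduct_neg, Complex.neg_re, re_star_dotProduct_mulVec_of_skewHermitian hJ, neg_zero])
  obtain ⟨dR, hdR, hRdR, hRv, hdRn⟩ := hR.exists_perturbation_mulVec_eq_zero v
  refine ⟨dJ, dR, ⟨hdJ, hdR, hRdR⟩, by rw [add_mulVec, hJv, add_neg_cancel], hRv, ?_⟩
  rw [vecNorm_neg] at hdJn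
  have hJ2 := pow_le_pow_left₀ (specNorm_nonneg _) hdJn 2
  have hR2 := pow_le_pow_left₀ (specNorm_nonneg _) hdRn 2
  rw [div_pow] at hJ2
  unfold nullVectorCost
  linarith

lemma not_exists_singular_perturbation_of_posDef {E J R : Matrix (Fin n) (Fin n) ℂ}
    (hE : E.PosDef) (hJ : Jᴴ = -J) :
    ¬ ∃ dJ dR, SdJR R dJ dR ∧ pencilSingular E (J + dJ - (R + dR)) := by
  rintro ⟨dJ, dR, hS, hsing⟩
  obtain ⟨v, hv0, hEv, -⟩ := exists_null_vector_of_pencilSingular hE.posSemidef hJ hS hsing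
  simpa [hEv] using hE.dotProduct_mulVec_pos hv0

lemma dSingSdJR_eq_top {E J R : Matrix (Fin n) (Fin n) ℂ}
    (h : ¬ ∃ dJ dR, SdJR R dJ dR ∧ pencilSingular E (J + dJ - (R + dR))) :
    dSingSdJR E J R = ⊤ :=
  sInf_eq_top.mpr fun _ ⟨dJ, dR, hS, hsing, _⟩ => absurd ⟨dJ, dR, hS, hsing⟩ h

lemma dSingSdJR_sq_eq_sInf {E J R : Matrix (Fin n) (Fin n) ℂ} (hE : E.PosSemidef)
    (hJ : Jᴴ = -J) (hR : R.PosSemidef) (hker : ∃ v ≠ 0, E *ᵥ v = 0) :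
    dSingSdJR E J R ^ 2 =
      ENNReal.ofReal (sInf (nullVectorCost J R '' {v | v ≠ 0 ∧ E *ᵥ v = 0})) := by
  set C := nullVectorCost J R '' {v | v ≠ 0 ∧ E *ᵥ v = 0}
  have hC0 : ∀ q ∈ C, 0 ≤ q := by
    rintro _ ⟨v, -, rfl⟩
    unfold nullVectorCost
    positivity
  have hCne : C.Nonempty := Set.Nonempty.image _ hker
  set f : ℝ → ℝ≥0∞ := fun q => ENNReal.ofReal √q
  have hf : Monotone f := fun a b hab => ENNReal.ofReal_le_ofReal (Real.sqrt_le_sqrt hab)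
  have hdist : dSingSdJR E J R = sInf (f '' C) := by
    refine le_antisymm (le_sInf ?_) (le_sInf ?_)
    · rintro _ ⟨_, ⟨v, ⟨hv0, hEv⟩, rfl⟩, rfl⟩
      obtain ⟨dJ, dR, hS, hJv, hRv, hle⟩ := exists_perturbation_le_nullVectorCost hJ hR hv0
      have hsing : pencilSingular E (J + dJ - (R + dR)) :=
        pencilSingular_of_mulVec_eq_zero hv0 hEv (by rw [sub_mulVec, hJv, hRv, sub_zero])
      exact sInf_le_of_le ⟨dJ, dR, hS, hsing, rfl⟩ (hf hle)
    · rintro _ ⟨dJ, dR, hS, hsing, rfl⟩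
      obtain ⟨v, hv0, hEv, hJv, hRv⟩ := exists_null_vector_of_pencilSingular hE hJ hS hsing
      exact sInf_le_of_le ⟨_, ⟨v, ⟨hv0, hEv⟩, rfl⟩, rfl⟩ (hf (nullVectorCost_le hS.2.1 hJv hRv))
  have hcont : ContinuousAt f (sInf C) :=
    (ENNReal.continuous_ofReal.comp Real.continuous_sqrt).continuousAt
  rw [hdist, ← hf.map_csInf_of_continuousAt hcont hCne ⟨0, hC0⟩,
    ← ENNReal.ofReal_pow (Real.sqrt_nonneg _), Real.sq_sqrt (le_csInf hCne hC0)]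

end Distance

section Isometries

variable {ι κ : Type*} [Fintype ι] [Fintype κ] [DecidableEq κ] {N : Matrix ι κ ℂ}

lemma vecNorm_mulVec_of_conjTranspose_mul_self_eq_one (hN : Nᴴ * N = 1) (x : κ → ℂ) :
    vecNorm (N *ᵥ x) = vecNorm x := by
  have h := re_star_dotProduct_conjTranspose_mul_self_mulVec N x
  rw [hN, one_mulVec, re_star_dotProduct_self] at h
  exact (pow_left_inj₀ (vecNorm_nonneg _) (vecNorm_nonneg _) two_ne_zero).mp h.symm

lemma mulVec_ne_zero_of_conjTranspose_mul_self_eq_one (hN : Nᴴ * N = 1) {x : κ → ℂ}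
    (hx : x ≠ 0) : N *ᵥ x ≠ 0 := fun h =>
  hx (by simpa [mulVec_mulVec, hN] using congrArg (Nᴴ *ᵥ ·) h)

lemma nullVectorCost_mulVec (hN : Nᴴ * N = 1) (J : Matrix ι ι ℂ) {R : Matrix ι ι ℂ}
    (hR : Rᴴ = R) (x : κ → ℂ) :
    nullVectorCost J R (N *ᵥ x) =
      ((star x ⬝ᵥ (Nᴴ * (R * R) * N) *ᵥ x).re / (star x ⬝ᵥ (Nᴴ * R * N) *ᵥ x).re) ^ 2
        + (star x ⬝ᵥ (Nᴴ * Jᴴ * J * N) *ᵥ x).re / (star x ⬝ᵥ x).re := by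
  have hRR : Nᴴ * (R * R) * N = (R * N)ᴴ * (R * N) := by
    rw [conjTranspose_mul, hR]
    simp only [Matrix.mul_assoc]
  have hJJ : Nᴴ * Jᴴ * J * N = (J * N)ᴴ * (J * N) := by
    rw [conjTranspose_mul]
    simp only [Matrix.mul_assoc]
  rw [nullVectorCost, hRR, hJJ, re_star_dotProduct_conjTranspose_mul_self_mulVec,
    re_star_dotProduct_conjTranspose_mul_self_mulVec, star_dotProduct_conjTranspose_mul_mul_mulVec,
    re_star_dotProduct_self, ← vecNorm_mulVec_of_conjTranspose_mul_self_eq_one hN x,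
    ← mulVec_mulVec, ← mulVec_mulVec]

lemma nullVectorCost_image_ker {E J R : Matrix ι ι ℂ} (hR : Rᴴ = R) (hN : Nᴴ * N = 1)
    (hker : ∀ v, E *ᵥ v = 0 ↔ ∃ c, v = N *ᵥ c) :
    nullVectorCost J R '' {v | v ≠ 0 ∧ E *ᵥ v = 0} =
      {q : ℝ | ∃ x : κ → ℂ, x ≠ 0 ∧
        q = ((star x ⬝ᵥ (Nᴴ * (R * R) * N) *ᵥ x).re / (star x ⬝ᵥ (Nᴴ * R * N) *ᵥ x).re) ^ 2
          + (star x ⬝ᵥ (Nᴴ * Jᴴ * J * N) *ᵥ x).re / (star x ⬝ᵥ x).re} := by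
  ext q
  constructor
  · rintro ⟨v, ⟨hv0, hEv⟩, rfl⟩
    obtain ⟨x, rfl⟩ := (hker v).mp hEv
    exact ⟨x, fun hx => hv0 (by rw [hx, mulVec_zero]), nullVectorCost_mulVec hN J hR x⟩
  · rintro ⟨x, hx, rfl⟩
    exact ⟨N *ᵥ x, ⟨mulVec_ne_zero_of_conjTranspose_mul_self_eq_one hN hx, (hker _).mpr ⟨x, rfl⟩⟩,
      nullVectorCost_mulVec hN J hR x⟩

end Isometries

theorem dH_dist_sing_SdJR_general {n : ℕ} (E J R : Matrix (Fin n) (Fin n) ℂ)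
    (hE : E.PosSemidef) (hJ : Jᴴ = -J) (hR : R.PosSemidef) :
    (E.PosDef →
      (¬ ∃ dJ dR : Matrix (Fin n) (Fin n) ℂ, SdJR R dJ dR ∧
        pencilSingular E (J + dJ - (R + dR))) ∧
      dSingSdJR E J R = ⊤) ∧
    (∀ (r : ℕ) (N : Matrix (Fin n) (Fin r) ℂ), 1 ≤ r → Nᴴ * N = 1 →
      (∀ v : Fin n → ℂ, E *ᵥ v = 0 ↔ ∃ c : Fin r → ℂ, v = N *ᵥ c) →
      (dSingSdJR E J R) ^ 2 =
        ENNReal.ofReal (sInf {q : ℝ | ∃ x : Fin r → ℂ, x ≠ 0 ∧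
          q = ((star x ⬝ᵥ (Nᴴ * (R * R) * N) *ᵥ x).re /
                (star x ⬝ᵥ (Nᴴ * R * N) *ᵥ x).re) ^ 2
            + (star x ⬝ᵥ (Nᴴ * Jᴴ * J * N) *ᵥ x).re / (star x ⬝ᵥ x).re})) := by
  refine ⟨fun hEpd => ?_, fun r N hr hN hker => ?_⟩
  · have h := not_exists_singular_perturbation_of_posDef (R := R) hEpd hJ
    exact ⟨h, dSingSdJR_eq_top h⟩
  · have hx : (fun _ => 1 : Fin r → ℂ) ≠ 0 := fun h => one_ne_zero (congrFun h ⟨0, hr⟩)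
    have hK : ∃ v ≠ 0, E *ᵥ v = 0 :=
      ⟨_, mulVec_ne_zero_of_conjTranspose_mul_self_eq_one hN hx, (hker _).mpr ⟨_, rfl⟩⟩
    rw [dSingSdJR_sq_eq_sInf hE hJ hR hK, nullVectorCost_image_ker hR.1 hN hker]

/-- for a regular dH pencil, if `E` is positive definite there is no structured
perturbation in `S_d(J,R)` making the pencil singular (so `d_sing^{S_d}(J,R) = ∞`); if `E` is
singular with `N` an orthonormal basis matrix of `ker E` (of dimension `r ≥ 1`), then
`d_sing^{S_d}(J,R)²` is given by the stated Rayleigh-quotient infimum.  (Real division by zero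
is `0` in Lean, matching the `0/0 = 0` convention.) -/
theorem dH_dist_sing_SdJR {n : ℕ} (E J R : Matrix (Fin n) (Fin n) ℂ)
    (hE : E.PosSemidef) (hJ : Jᴴ = -J) (hR : R.PosSemidef)
    (hreg : ∃ μ : ℂ, Matrix.det (μ • E - (J - R)) ≠ 0) :
    (E.PosDef →
      (¬ ∃ dJ dR : Matrix (Fin n) (Fin n) ℂ, SdJR R dJ dR ∧
        pencilSingular E (J + dJ - (R + dR))) ∧
      dSingSdJR E J R = ⊤) ∧
    (∀ (r : ℕ) (N : Matrix (Fin n) (Fin r) ℂ), 1 ≤ r → Nᴴ * N = 1 →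
      (∀ v : Fin n → ℂ, E *ᵥ v = 0 ↔ ∃ c : Fin r → ℂ, v = N *ᵥ c) →
      (dSingSdJR E J R) ^ 2 =
        ENNReal.ofReal (sInf {q : ℝ | ∃ x : Fin r → ℂ, x ≠ 0 ∧
          q = ((star x ⬝ᵥ (Nᴴ * (R * R) * N) *ᵥ x).re /
                (star x ⬝ᵥ (Nᴴ * R * N) *ᵥ x).re) ^ 2
            + (star x ⬝ᵥ (Nᴴ * Jᴴ * J * N) *ᵥ x).re / (star x ⬝ᵥ x).re})) :=
  dH_dist_sing_SdJR_general E J R hE hJ hR
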